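/- arXiv:2202.08425 — 5 statements merged into one kernel-verified Lean document; each statement's English description precedes it below -/
import Mathlib

section
/- Let f ∈ R = k⟦x₁,…,xₙ⟧ be nonzero with mult(f) ≥ 3, let a ≥ 0 be an integer, let g₁,…,gₙ ∈ m^a·J_f, and set g = Σ_{i=1}^n gᵢ·∂f/∂xᵢ. Then the k-algebra endomorphism φ of R determined by φ(xᵢ) = xᵢ + gᵢ for all i is a k-algebra automorphism of R, and it satisfies φ(f) − (f+g) ∈ m^{2a+1}·J_f². -/
/-!
Put `D u = φ u - u` and `T u = φ u - u - ∑ gᵢ ∂ᵢu`. They obey the twisted Leibniz rules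
`D (u v) = D u · φ v + u · D v` and `T (u v) = T u · v + u · T v + D u · D v`, with `D xᵢ = gᵢ` and
`T xᵢ = 0`. Writing a series as `c + ∑ xᵢ vᵢ` then shows `D w ∈ G + m·D(R)` and
`T w ∈ G² + m·T(R)` for `G = (g₁, …, gₙ)`; as ideals of the Noetherian local ring `R` are
`m`-adically closed, `D(R) ⊆ G` and `T(R) ⊆ G²`. The Leibniz rules upgrade this to
`T(m³) ⊆ G² m ⊆ m^(2a+1) J_f²`.

Since `gᵢ ∈ J_f ⊆ m²`, `φ` induces the identity on every `m^q / m^(q+1)`; so `φ` is injective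
because `R` is `m`-adically separated, and surjective because `R` is `m`-adically complete and
`φ(m) R = m` by Nakayama.
-/

noncomputable section

open MvPowerSeries

/-- Partial derivative `∂f/∂xᵢ` of a multivariate formal power series, defined coefficientwise. -/
def pderiv {k : Type*} [CommRing k] {n : ℕ} (i : Fin n) (f : MvPowerSeries (Fin n) k) :
    MvPowerSeries (Fin n) k :=
  fun β => (β i + 1 : ℕ) • MvPowerSeries.coeff (β + Finsupp.single i 1) f

/-- The Jacobian ideal `J_f = (∂f/∂x₁, …, ∂f/∂xₙ)` of `f`. -/
def jacobianIdeal {k : Type*} [CommRing k] {n : ℕ} (f : MvPowerSeries (Fin n) k) :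
    Ideal (MvPowerSeries (Fin n) k) :=
  Ideal.span (Set.range fun i => pderiv i f)

/-- The maximal ideal of `k⟦x₁,…,xₙ⟧`: series with zero constant term. -/
def mIdeal (k : Type*) [CommRing k] (n : ℕ) : Ideal (MvPowerSeries (Fin n) k) :=
  RingHom.ker (MvPowerSeries.constantCoeff : MvPowerSeries (Fin n) k →+* k)

theorem Ideal.mem_of_forall_mem_sup_pow {A : Type*} [CommRing A] [IsNoetherianRing A]
    {I J : Ideal A} (hI : I ≤ Ideal.jacobson ⊥) {x : A} (hx : ∀ N, x ∈ J ⊔ I ^ N) : x ∈ J := by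
  rw [← Ideal.Quotient.eq_zero_iff_mem]
  refine (IsHausdorff.of_le_jacobson I (A ⧸ J) hI).haus _ fun N => ?_
  obtain ⟨j, hj, i, hi, rfl⟩ := Submodule.mem_sup.mp (hx N)
  rw [SModEq.zero, map_add, Ideal.Quotient.eq_zero_iff_mem.mpr hj, zero_add,
    show Ideal.Quotient.mk J i = i • 1 by
      rw [Algebra.smul_def, mul_one, Ideal.Quotient.algebraMap_eq]]
  exact Submodule.smul_mem_smul hi Submodule.mem_top

theorem Derivation.map_mem_pow_of_mem_pow_succ {S A : Type*} [CommRing S] [CommRing A]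
    [Algebra S A] (D : Derivation S A A) {I : Ideal A} {q : ℕ} {x : A} (hx : x ∈ I ^ (q + 1)) :
    D x ∈ I ^ q := by
  induction q generalizing x with
  | zero => simp
  | succ q ih =>
    rw [pow_succ] at hx
    refine Submodule.mul_induction_on hx (fun a ha b hb => ?_) (fun a b ha hb => ?_)
    · rw [D.leibniz, smul_eq_mul, smul_eq_mul]
      refine add_mem (Ideal.mul_mem_right _ _ ha) ?_
      rw [pow_succ']
      exact Ideal.mul_mem_mul hb (ih ha)
    · rw [map_add]; exact add_mem ha hb

section RingHom

variable {A : Type*} [CommRing A] (φ : A →+* A) {I : Ideal A}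

theorem RingHom.sub_mem_pow_succ_of_mem_pow (h0 : ∀ x, φ x - x ∈ I)
    (h1 : ∀ x ∈ I, φ x - x ∈ I ^ 2) {q : ℕ} {x : A} (hx : x ∈ I ^ q) : φ x - x ∈ I ^ (q + 1) := by
  induction q generalizing x with
  | zero => simpa using h0 x
  | succ q ih =>
    rw [pow_succ] at hx
    refine Submodule.mul_induction_on hx (fun a ha b hb => ?_) (fun a b ha hb => ?_)
    · have hφb : φ b ∈ I := by simpa using add_mem (h0 b) hb
      rw [show φ (a * b) - a * b = (φ a - a) * φ b + a * (φ b - b) by rw [map_mul]; ring]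
      refine add_mem ?_ ?_
      · rw [pow_succ]; exact Ideal.mul_mem_mul (ih ha) hφb
      · rw [add_assoc, pow_add]; exact Ideal.mul_mem_mul ha (h1 b hb)
    · rw [map_add, add_sub_add_comm]; exact add_mem ha hb

theorem RingHom.sub_mem_sq_of_mem_span {S : Set A} (h0 : ∀ x, φ x - x ∈ Ideal.span S)
    (hS : ∀ s ∈ S, φ s - s ∈ Ideal.span S ^ 2) {x : A} (hx : x ∈ Ideal.span S) :
    φ x - x ∈ Ideal.span S ^ 2 := by
  induction hx using Submodule.span_induction with
  | mem s hs => exact hS s hs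
  | zero => simp
  | add a b _ _ ha hb => rw [map_add, add_sub_add_comm]; exact add_mem ha hb
  | smul r a haS ha =>
    have hφa : φ a ∈ Ideal.span S := by simpa using add_mem (Ideal.pow_le_self two_ne_zero ha) haS
    rw [smul_eq_mul, show φ (r * a) - r * a = (φ r - r) * φ a + r * (φ a - a) by
      rw [map_mul]; ring]
    refine add_mem ?_ (Ideal.mul_mem_left _ _ ha)
    rw [pow_two]
    exact Ideal.mul_mem_mul (h0 r) hφa

theorem RingHom.injective_of_sub_mem_pow_succ [IsHausdorff I A]
    (h : ∀ q, ∀ x ∈ I ^ q, φ x - x ∈ I ^ (q + 1)) : Function.Injective φ := by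
  refine (injective_iff_map_eq_zero φ).mpr fun x hx => IsHausdorff.haus' (I := I) x fun q => ?_
  rw [SModEq.zero, smul_eq_mul, Ideal.mul_top]
  induction q with
  | zero => simp
  | succ q ih => simpa [hx] using neg_mem (h q x ih)

theorem RingHom.surjective_of_sub_mem_pow_succ [IsAdicComplete I A] (hI : I.FG)
    (h : ∀ q, ∀ x ∈ I ^ q, φ x - x ∈ I ^ (q + 1)) : Function.Surjective φ := by
  have hmap : I.map φ = I := by
    refine le_antisymm (Ideal.map_le_iff_le_comap.mpr fun x hx => ?_) ?_
    · simpa using add_mem (Ideal.pow_le_self two_ne_zero (h 1 x (by simpa using hx))) hx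
    · refine Submodule.le_of_le_smul_of_le_jacobson_bot hI (IsAdicComplete.le_jacobson_bot I)
        fun x hx => ?_
      rw [show x = φ x - (φ x - x) by ring, smul_eq_mul, ← pow_two]
      exact Submodule.sub_mem_sup (Ideal.mem_map_of_mem φ hx) (h 1 x (by simpa using hx))
  have : IsHausdorff (I.map φ) A := by rw [hmap]; infer_instance
  refine surjective_of_mk_map_comp_surjective (I := I) φ fun y => ?_
  obtain ⟨y, rfl⟩ := Ideal.Quotient.mk_surjective y
  refine ⟨y, ?_⟩
  rw [RingHom.comp_apply, Ideal.Quotient.eq, hmap]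
  simpa using h 0 y (by simp)

theorem RingHom.sub_mem_mul_of_mem_mul_self {G : Ideal A} (hG : ∀ x, φ x - x ∈ G) (hGI : G ≤ I)
    {x : A} (hx : x ∈ I * I) : φ x - x ∈ G * I := by
  refine Submodule.mul_induction_on hx (fun a ha b hb => ?_) (fun a b ha hb => ?_)
  · have hφb : φ b ∈ I := by simpa using add_mem (hGI (hG b)) hb
    rw [show φ (a * b) - a * b = (φ a - a) * φ b + (φ b - b) * a by rw [map_mul]; ring]
    exact add_mem (Ideal.mul_mem_mul (hG a) hφb) (Ideal.mul_mem_mul (hG b) ha)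
  · rw [map_add, add_sub_add_comm]; exact add_mem ha hb

end RingHom

section Taylor

variable {S A ι : Type*} [CommRing S] [CommRing A] [Algebra S A] [Fintype ι]
  (φ : A →+* A) (g : ι → A) (d : ι → Derivation S A A)

def taylorRemainder (u : A) : A :=
  φ u - u - ∑ i, g i * d i u

theorem taylorRemainder_add (u v : A) :
    taylorRemainder φ g d (u + v) = taylorRemainder φ g d u + taylorRemainder φ g d v := by
  simp only [taylorRemainder, map_add, mul_add, Finset.sum_add_distrib]
  ring

theorem taylorRemainder_mul (u v : A) :
    taylorRemainder φ g d (u * v) = taylorRemainder φ g d u * v + u * taylorRemainder φ g d v +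
      (φ u - u) * (φ v - v) := by
  have hsum : ∑ i, g i * d i (u * v) = u * ∑ i, g i * d i v + v * ∑ i, g i * d i u := by
    rw [Finset.mul_sum, Finset.mul_sum, ← Finset.sum_add_distrib]
    refine Finset.sum_congr rfl fun i _ => ?_
    rw [Derivation.leibniz, smul_eq_mul, smul_eq_mul]
    ring
  simp only [taylorRemainder, map_mul, hsum]
  ring

variable {φ g d} {G I : Ideal A}

theorem taylorRemainder_mem_of_mem_pow_three (hG : ∀ x, φ x - x ∈ G)
    (hT : ∀ x, taylorRemainder φ g d x ∈ G ^ 2) (hGI : G ≤ I) {x : A} (hx : x ∈ I ^ 3) :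
    taylorRemainder φ g d x ∈ G ^ 2 * I := by
  rw [pow_succ, pow_two] at hx
  refine Submodule.mul_induction_on hx (fun a ha b hb => ?_) (fun a b ha hb => ?_)
  · rw [taylorRemainder_mul]
    refine add_mem (add_mem (Ideal.mul_mem_mul (hT a) hb) ?_) ?_
    · rw [mul_comm a]
      exact Ideal.mul_mem_mul (hT b) (Ideal.mul_le_right ha)
    · rw [pow_two, mul_right_comm]
      exact Ideal.mul_mem_mul (φ.sub_mem_mul_of_mem_mul_self hG hGI ha) (hG b)
  · rw [taylorRemainder_add]; exact add_mem ha hb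

end Taylor

namespace MvPowerSeries

variable {σ R : Type*} [Fintype σ] [LinearOrder σ] [CommRing R]

theorem ker_constantCoeff_eq_span_X :
    RingHom.ker (constantCoeff : MvPowerSeries σ R →+* R) = Ideal.span (Set.range X) := by
  refine le_antisymm (fun w hw => ?_) (Ideal.span_le.mpr ?_)
  · -- collect in `v i` the monomials of `w` whose least variable is `X i`, divided by `X i`
    let v : σ → MvPowerSeries σ R := fun i d =>
      if (d + Finsupp.single i 1).support.min = (i : WithTop σ) then
        coeff (d + Finsupp.single i 1) w else 0
    have hcoeff (i : σ) (d : σ →₀ ℕ) :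
        coeff d (X i * v i) = if d.support.min = (i : WithTop σ) then coeff d w else 0 := by
      rw [X, coeff_monomial_mul, one_mul]
      split_ifs with hle hmin hmin
      · change (if _ = _ then _ else _) = _
        rw [tsub_add_cancel_of_le hle, if_pos hmin]
      · change (if _ = _ then _ else _) = _
        rw [tsub_add_cancel_of_le hle, if_neg hmin]
      · exact absurd (Finsupp.single_le_iff.mpr
          (Nat.one_le_iff_ne_zero.mpr (Finsupp.mem_support_iff.mp (Finset.mem_of_min hmin)))) hle
      · rfl
    have hw : w = ∑ i, X i * v i := by
      ext d
      simp_rw [map_sum, hcoeff]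
      by_cases hd : d = 0
      · subst hd
        simpa [eq_comm] using hw
      · obtain ⟨i, hi⟩ := Finset.min_of_nonempty (Finsupp.support_nonempty_iff.mpr hd)
        simp [hi]
    rw [hw]
    exact Ideal.sum_mem _ fun i _ => Ideal.mul_mem_right _ _ (Ideal.subset_span ⟨i, rfl⟩)
  · rintro _ ⟨i, rfl⟩
    simp [RingHom.mem_ker]

theorem exists_eq_C_add_sum_X_mul (w : MvPowerSeries σ R) :
    ∃ v : σ → MvPowerSeries σ R, w = C (constantCoeff w) + ∑ i, X i * v i := by
  have : w - C (constantCoeff w) ∈ Ideal.span (Set.range X) := by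
    rw [← ker_constantCoeff_eq_span_X, RingHom.mem_ker]
    simp
  obtain ⟨v, hv⟩ := Ideal.mem_span_range_iff_exists_fun.mp this
  exact ⟨v, by simp_rw [mul_comm (X _), hv, add_sub_cancel]⟩

end MvPowerSeries

section PowerSeries

variable {k : Type*} [CommRing k] {n : ℕ}

theorem mIdeal_eq_span_X : mIdeal k n = Ideal.span (Set.range X) :=
  MvPowerSeries.ker_constantCoeff_eq_span_X

theorem X_mem_mIdeal (i : Fin n) : (X i : MvPowerSeries (Fin n) k) ∈ mIdeal k n := by
  simp [mIdeal]

theorem mIdeal_fg : (mIdeal k n).FG := by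
  rw [mIdeal_eq_span_X]
  exact Submodule.fg_span (Set.finite_range _)

instance isAdicComplete_mIdeal : IsAdicComplete (mIdeal k n) (MvPowerSeries (Fin n) k) := by
  rw [mIdeal_eq_span_X]
  infer_instance

theorem pderiv_eq_mvPowerSeries_pderiv (i : Fin n) (f : MvPowerSeries (Fin n) k) :
    _root_.pderiv i f = MvPowerSeries.pderiv k i f := by
  ext d
  rw [MvPowerSeries.coeff_pderiv, mul_comm, ← Nat.cast_add_one, ← nsmul_eq_mul]
  rfl

theorem jacobianIdeal_le_pow {f : MvPowerSeries (Fin n) k} {q : ℕ}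
    (hf : f ∈ mIdeal k n ^ (q + 1)) : jacobianIdeal f ≤ mIdeal k n ^ q := by
  rw [jacobianIdeal, Ideal.span_le, Set.range_subset_iff]
  intro i
  rw [pderiv_eq_mvPowerSeries_pderiv]
  exact Derivation.map_mem_pow_of_mem_pow_succ _ hf

variable [IsNoetherianRing k]

/-- Induction on `N` gives `L w ∈ J + m ^ N` for all `w`; ideals of the Noetherian ring `R` are
`m`-adically closed. -/
theorem mem_of_forall_X_mul_sub_mem {J : Ideal (MvPowerSeries (Fin n) k)}
    (L : MvPowerSeries (Fin n) k → MvPowerSeries (Fin n) k) (hL : ∀ u v, L (u + v) = L u + L v)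
    (hC : ∀ c, L (C c) = 0) (hX : ∀ i w, L (X i * w) - X i * L w ∈ J)
    (w : MvPowerSeries (Fin n) k) : L w ∈ J := by
  refine Ideal.mem_of_forall_mem_sup_pow (IsAdicComplete.le_jacobson_bot (mIdeal k n))
    fun N => ?_
  induction N generalizing w with
  | zero => simp
  | succ N ih =>
    obtain ⟨v, hv⟩ := MvPowerSeries.exists_eq_C_add_sum_X_mul w
    rw [hv, hL, hC, zero_add,
      show L (∑ i, X i * v i) = ∑ i, L (X i * v i) from map_sum (AddMonoidHom.mk' L hL) _ _]
    refine Ideal.sum_mem _ fun i _ => ?_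
    rw [← sub_add_cancel (L (X i * v i)) (X i * L (v i))]
    refine add_mem (Ideal.mem_sup_left (hX i (v i))) ?_
    obtain ⟨j, hj, t, ht, hjt⟩ := Submodule.mem_sup.mp (ih (v i))
    rw [← hjt, mul_add, pow_succ']
    exact add_mem (Ideal.mem_sup_left (J.mul_mem_left _ hj))
      (Ideal.mem_sup_right (Ideal.mul_mem_mul (X_mem_mIdeal i) ht))

variable {φ : MvPowerSeries (Fin n) k →ₐ[k] MvPowerSeries (Fin n) k}
  {g : Fin n → MvPowerSeries (Fin n) k}

theorem sub_mem_span_range_of_map_X (hφ : ∀ i, φ (X i) = X i + g i)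
    (w : MvPowerSeries (Fin n) k) : φ w - w ∈ Ideal.span (Set.range g) := by
  refine mem_of_forall_X_mul_sub_mem (fun w => φ w - w) (fun u v => by simp only [map_add]; ring)
    (fun c => by rw [c_eq_algebraMap, AlgHom.commutes, sub_self]) (fun i w => ?_) w
  rw [show φ (X i * w) - X i * w - X i * (φ w - w) = g i * φ w by rw [map_mul, hφ]; ring]
  exact Ideal.mul_mem_right _ _ (Ideal.subset_span ⟨i, rfl⟩)

theorem taylorRemainder_mem_span_range_sq_of_map_X (hφ : ∀ i, φ (X i) = X i + g i)
    (w : MvPowerSeries (Fin n) k) :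
    taylorRemainder (φ : MvPowerSeries (Fin n) k →+* _) g (MvPowerSeries.pderiv k) w ∈
      Ideal.span (Set.range g) ^ 2 := by
  refine mem_of_forall_X_mul_sub_mem _ (taylorRemainder_add _ _ _) (fun c => ?_) (fun i w => ?_) w
  · simp [taylorRemainder, c_eq_algebraMap]
  · have hTX : taylorRemainder (φ : MvPowerSeries (Fin n) k →+* _) g (MvPowerSeries.pderiv k) (X i)
        = 0 := by
      classical
      simp [taylorRemainder, hφ, pderiv_X, Pi.single_apply]
    rw [taylorRemainder_mul, hTX, zero_mul, zero_add, add_sub_cancel_left, RingHom.coe_coe, hφ,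
      add_sub_cancel_left, pow_two]
    exact Ideal.mul_mem_mul (Ideal.subset_span ⟨i, rfl⟩) (sub_mem_span_range_of_map_X hφ w)

theorem bijective_of_map_X (hφ : ∀ i, φ (X i) = X i + g i)
    (hg : Ideal.span (Set.range g) ≤ mIdeal k n ^ 2) : Function.Bijective φ := by
  have hG : ∀ x, φ x - x ∈ mIdeal k n := fun x =>
    Ideal.pow_le_self two_ne_zero (hg (sub_mem_span_range_of_map_X hφ x))
  have h1 : ∀ x ∈ mIdeal k n, φ x - x ∈ mIdeal k n ^ 2 := by
    simp_rw [mIdeal_eq_span_X] at hG hg ⊢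
    refine fun x => RingHom.sub_mem_sq_of_mem_span _ hG ?_
    rintro _ ⟨i, rfl⟩
    simpa [hφ] using hg (Ideal.subset_span ⟨i, rfl⟩)
  have hD : ∀ q, ∀ x ∈ mIdeal k n ^ q, φ x - x ∈ mIdeal k n ^ (q + 1) := fun q x hx =>
    RingHom.sub_mem_pow_succ_of_mem_pow _ hG h1 hx
  exact ⟨RingHom.injective_of_sub_mem_pow_succ _ hD,
    RingHom.surjective_of_sub_mem_pow_succ _ mIdeal_fg hD⟩

end PowerSeries

theorem stmt2_general {k : Type*} [Field k] {n : ℕ} (f : MvPowerSeries (Fin n) k)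
    (hf : f ∈ mIdeal k n ^ 3) (a : ℕ) (g : Fin n → MvPowerSeries (Fin n) k)
    (hg : ∀ i, g i ∈ mIdeal k n ^ a * jacobianIdeal f) :
    (∃ φ : MvPowerSeries (Fin n) k →ₐ[k] MvPowerSeries (Fin n) k,
        ∀ i, φ (X i) = X i + g i) ∧
    ∀ φ : MvPowerSeries (Fin n) k →ₐ[k] MvPowerSeries (Fin n) k,
      (∀ i, φ (X i) = X i + g i) →
        Function.Bijective φ ∧
          φ f - (f + ∑ i, g i * pderiv i f) ∈ mIdeal k n ^ (2 * a + 1) * jacobianIdeal f ^ 2 := by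
  have hgJ : Ideal.span (Set.range g) ≤ mIdeal k n ^ a * jacobianIdeal f :=
    Ideal.span_le.mpr (Set.range_subset_iff.mpr hg)
  have hgm : Ideal.span (Set.range g) ≤ mIdeal k n ^ 2 :=
    hgJ.trans (Ideal.mul_le_right.trans (jacobianIdeal_le_pow hf))
  have hsubst : HasSubst fun i => (X i + g i : MvPowerSeries (Fin n) k) :=
    hasSubst_of_constantCoeff_zero fun i => by
      simpa [mIdeal] using Ideal.pow_le_self two_ne_zero (hgm (Ideal.subset_span ⟨i, rfl⟩))
  refine ⟨⟨substAlgHom hsubst, substAlgHom_X hsubst⟩, fun φ hφ => ⟨?_, ?_⟩⟩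
  · exact bijective_of_map_X hφ hgm
  · have hT := taylorRemainder_mem_of_mem_pow_three (sub_mem_span_range_of_map_X hφ)
      (taylorRemainder_mem_span_range_sq_of_map_X hφ) (hgm.trans (Ideal.pow_le_self two_ne_zero))
      hf
    rw [taylorRemainder, sub_sub] at hT
    simp only [← pderiv_eq_mvPowerSeries_pderiv] at hT
    have hle : Ideal.span (Set.range g) ^ 2 * mIdeal k n ≤
        mIdeal k n ^ (2 * a + 1) * jacobianIdeal f ^ 2 :=
      calc Ideal.span (Set.range g) ^ 2 * mIdeal k n
          ≤ (mIdeal k n ^ a * jacobianIdeal f) ^ 2 * mIdeal k n := by gcongr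
        _ = mIdeal k n ^ (2 * a + 1) * jacobianIdeal f ^ 2 := by ring
    exact hle hT

/-- Let `f ∈ R = k⟦x₁,…,xₙ⟧` be nonzero with `mult f ≥ 3`, let `a ≥ 0`, let
`g₁,…,gₙ ∈ m^a·J_f`, and set `g = Σ gᵢ·∂f/∂xᵢ`.  Then the `k`-algebra endomorphism `φ` of `R`
determined by `φ(xᵢ) = xᵢ + gᵢ` exists, is an automorphism, and satisfies
`φ(f) − (f+g) ∈ m^{2a+1}·J_f²`. -/
theorem stmt2 {k : Type*} [Field k] {n : ℕ} (f : MvPowerSeries (Fin n) k)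
    (hf0 : f ≠ 0) (hf : f ∈ mIdeal k n ^ 3) (a : ℕ) (g : Fin n → MvPowerSeries (Fin n) k)
    (hg : ∀ i, g i ∈ mIdeal k n ^ a * jacobianIdeal f) :
    (∃ φ : MvPowerSeries (Fin n) k →ₐ[k] MvPowerSeries (Fin n) k,
        ∀ i, φ (X i) = X i + g i) ∧
    ∀ φ : MvPowerSeries (Fin n) k →ₐ[k] MvPowerSeries (Fin n) k,
      (∀ i, φ (X i) = X i + g i) →
        Function.Bijective φ ∧
          φ f - (f + ∑ i, g i * pderiv i f) ∈ mIdeal k n ^ (2 * a + 1) * jacobianIdeal f ^ 2 :=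
  stmt2_general f hf a g hg
end
end

section
/- (Formal Morse lemma in characteristic ≠ 2.) Let k be a field with char(k) ≠ 2 and f ∈ R = k⟦x₁,…,xₙ⟧ with f ∈ m² and whose homogeneous degree-2 part is f₂ = Σ_{i=1}^r aᵢxᵢ² with a₁,…,a_r ∈ k^×. Then there is a k-algebra automorphism φ of R fixing x_{r+1},…,xₙ such that φ(f) = Σ_{i=1}^r aᵢxᵢ² + h(x_{r+1},…,xₙ), for some h ∈ k⟦x_{r+1},…,xₙ⟧ with h ∈ m³ (i.e., h = 0 or mult(h) ≥ 3). -/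
/-!
Completing the square one degree at a time. Suppose `f ≡ ∑_{i<r} aᵢUᵢ² + H` modulo `𝔪^(q+3)`,
where `Uᵢ ≡ xᵢ` modulo `𝔪²` and `H` involves only `x_{r+1}, …, xₙ`. Every monomial of the error
that contains some `xᵢ` with `i < r` is `xᵢ` times a series, so the error is `∑_{i<r} xᵢwᵢ` plus a
series in the last variables, with `wᵢ ∈ 𝔪^(q+2)`. Replacing `Uᵢ` by `Uᵢ + wᵢ/(2aᵢ)` pushes the
error into `𝔪^(q+4)`, since `2aᵢUᵢwᵢ/(2aᵢ) = xᵢwᵢ + (Uᵢ - xᵢ)wᵢ`. The `Uᵢ` converge `𝔪`-adically to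
`uᵢ` with `f = ∑_{i<r} aᵢuᵢ² + h`, `h` in the last variables.

The substitution `ψ : xᵢ ↦ uᵢ` (with `uᵢ = xᵢ` for `i ≥ r`) satisfies `ψ g - g ∈ 𝔪^(d+1)` for
`g ∈ 𝔪^d`, hence is injective and, by successive approximation, surjective; `φ = ψ⁻¹`.
-/

noncomputable section

open MvPowerSeries

/-- The homogeneous degree-2 part of a multivariate formal power series. -/
def part2 {k : Type*} [CommRing k] {n : ℕ} (f : MvPowerSeries (Fin n) k) :
    MvPowerSeries (Fin n) k :=
  fun β => if (β.sum fun _ e => e) = 2 then MvPowerSeries.coeff β f else 0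

/-- `f` involves only the variables `x_{r+1}, …, xₙ` (indices `≥ r`). -/
def highVars {k : Type*} [CommRing k] {n : ℕ} (r : ℕ) (f : MvPowerSeries (Fin n) k) : Prop :=
  ∀ β : Fin n →₀ ℕ, MvPowerSeries.coeff β f ≠ 0 → ∀ i : Fin n, (i : ℕ) < r → β i = 0

namespace MvPowerSeries

section OrderIdeal

variable (σ R : Type*) [CommRing R]

def orderIdeal (d : ℕ) : Ideal (MvPowerSeries σ R) where
  carrier := {f | (d : ℕ∞) ≤ f.order}
  add_mem' hf hg := (le_min hf hg).trans min_order_le_add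
  zero_mem' := by simp
  smul_mem' _ _ hf := (le_add_left hf).trans le_order_mul

variable {σ R} {f g : MvPowerSeries σ R} {d e : ℕ}

theorem mem_orderIdeal : f ∈ orderIdeal σ R d ↔ (d : ℕ∞) ≤ f.order := Iff.rfl

theorem mem_orderIdeal_iff :
    f ∈ orderIdeal σ R d ↔ ∀ γ : σ →₀ ℕ, γ.degree < d → coeff γ f = 0 :=
  ⟨fun hf _ hγ => coeff_of_lt_order ((Nat.cast_lt.mpr hγ).trans_le hf), nat_le_order⟩

theorem orderIdeal_antitone : Antitone (orderIdeal σ R) :=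
  fun _ _ hde _ hf => mem_orderIdeal.mpr ((Nat.cast_le.mpr hde).trans hf)

theorem orderIdeal_zero : orderIdeal σ R 0 = ⊤ :=
  eq_top_iff.mpr fun _ _ => by simp [orderIdeal]

theorem mul_mem_orderIdeal (hf : f ∈ orderIdeal σ R d) (hg : g ∈ orderIdeal σ R e) :
    f * g ∈ orderIdeal σ R (d + e) :=
  (by push_cast; exact add_le_add hf hg : ((d + e : ℕ) : ℕ∞) ≤ _).trans le_order_mul

theorem mem_orderIdeal_one_iff : f ∈ orderIdeal σ R 1 ↔ constantCoeff f = 0 :=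
  one_le_order_iff_constCoeff_eq_zero

theorem X_mem_orderIdeal_one (i : σ) : (X i : MvPowerSeries σ R) ∈ orderIdeal σ R 1 :=
  mem_orderIdeal_one_iff.mpr (constantCoeff_X i)

theorem mem_orderIdeal_one_of_sub_X_mem {i : σ} (hf : f - X i ∈ orderIdeal σ R 2) :
    f ∈ orderIdeal σ R 1 := by
  simpa using add_mem (orderIdeal_antitone one_le_two hf) (X_mem_orderIdeal_one i)

theorem eq_zero_of_forall_mem_orderIdeal (hf : ∀ d, f ∈ orderIdeal σ R d) : f = 0 :=
  order_eq_top_iff.mp (ENat.eq_top_iff_forall_ge.mpr hf)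

theorem exists_sub_mem_orderIdeal (F : ℕ → MvPowerSeries σ R) (c : ℕ)
    (hF : ∀ q, F (q + 1) - F q ∈ orderIdeal σ R (q + c)) :
    ∃ L, ∀ q, L - F q ∈ orderIdeal σ R (q + c) := by
  have hFF : ∀ q q', q ≤ q' → F q' - F q ∈ orderIdeal σ R (q + c) := by
    intro q q' hqq'
    induction q', hqq' using Nat.le_induction with
    | base => simp
    | succ q' hqq' ih =>
      simpa using add_mem ih (orderIdeal_antitone (by omega) (hF q'))
  let L : MvPowerSeries σ R := fun γ => coeff γ (F (γ.degree + 1))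
  refine ⟨L, fun q => mem_orderIdeal_iff.mpr fun γ hγ => ?_⟩
  rw [map_sub, sub_eq_zero]
  rcases le_total q (γ.degree + 1) with h | h
  · exact sub_eq_zero.mp (mem_orderIdeal_iff.mp (hFF _ _ h) γ hγ)
  · exact (sub_eq_zero.mp (mem_orderIdeal_iff.mp (hFF _ _ h) γ (by omega))).symm

theorem bijective_of_sub_mem_orderIdeal_succ (T : MvPowerSeries σ R →+ MvPowerSeries σ R)
    (hT : ∀ d f, f ∈ orderIdeal σ R d → T f - f ∈ orderIdeal σ R (d + 1)) :
    Function.Bijective T := by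
  have hT' : ∀ d f, f ∈ orderIdeal σ R d → T f ∈ orderIdeal σ R d := fun d f hf => by
    simpa using add_mem (orderIdeal_antitone d.le_succ (hT d f hf)) hf
  refine ⟨(injective_iff_map_eq_zero T).mpr fun f hf => ?_, fun g => ?_⟩
  · refine eq_zero_of_forall_mem_orderIdeal fun d => ?_
    induction d with
    | zero => simp [orderIdeal_zero]
    | succ d ih => simpa [hf] using hT d f ih
  obtain ⟨F, hF⟩ : ∃ F : ℕ → MvPowerSeries σ R, ∀ q, F (q + 1) = F q + (g - T (F q)) :=
    ⟨fun q => Nat.rec 0 (fun _ x => x + (g - T x)) q, fun _ => rfl⟩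
  have herr : ∀ q, g - T (F q) ∈ orderIdeal σ R q := by
    intro q
    induction q with
    | zero => simp [orderIdeal_zero]
    | succ q ih =>
      convert neg_mem (hT q _ ih) using 1
      rw [hF, map_add]
      abel
  obtain ⟨L, hL⟩ := exists_sub_mem_orderIdeal F 0 fun q => by simpa [hF] using herr q
  refine ⟨L, sub_eq_zero.mp (eq_zero_of_forall_mem_orderIdeal fun q => ?_)⟩
  have := sub_mem (hT' q _ (hL q)) (herr q)
  rwa [map_sub, sub_sub_sub_cancel_right] at this

theorem prod_mem_orderIdeal {ι : Type*} (s : Finset ι) {x : ι → MvPowerSeries σ R} {n : ι → ℕ}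
    (hx : ∀ i, x i ∈ orderIdeal σ R (n i)) : ∏ i ∈ s, x i ∈ orderIdeal σ R (∑ i ∈ s, n i) := by
  classical
  induction s using Finset.induction_on with
  | empty => simp [orderIdeal_zero]
  | insert j s hj ih =>
    rw [Finset.prod_insert hj, Finset.sum_insert hj]
    exact mul_mem_orderIdeal (hx j) ih

theorem prod_sub_prod_mem_orderIdeal {ι : Type*} (s : Finset ι) {x y : ι → MvPowerSeries σ R}
    {n : ι → ℕ} (hx : ∀ i, x i ∈ orderIdeal σ R (n i)) (hy : ∀ i, y i ∈ orderIdeal σ R (n i))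
    (hxy : ∀ i, x i - y i ∈ orderIdeal σ R (n i + 1)) :
    ∏ i ∈ s, x i - ∏ i ∈ s, y i ∈ orderIdeal σ R (∑ i ∈ s, n i + 1) := by
  classical
  induction s using Finset.induction_on with
  | empty => simp
  | insert j s hj ih =>
    rw [Finset.prod_insert hj, Finset.prod_insert hj, Finset.sum_insert hj]
    have key : x j * ∏ i ∈ s, x i - y j * ∏ i ∈ s, y i =
        x j * (∏ i ∈ s, x i - ∏ i ∈ s, y i) + (x j - y j) * ∏ i ∈ s, y i := by ring
    rw [key]
    refine add_mem ?_ ?_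
    · simpa [add_assoc] using mul_mem_orderIdeal (hx j) ih
    · simpa [add_right_comm] using mul_mem_orderIdeal (hxy j) (prod_mem_orderIdeal s hy)

theorem prod_pow_sub_prod_X_pow_mem_orderIdeal {v : σ → MvPowerSeries σ R}
    (hv : ∀ i, v i - X i ∈ orderIdeal σ R 2) (β : σ →₀ ℕ) :
    (β.prod fun i e => v i ^ e) - (β.prod fun i e => X i ^ e) ∈
      orderIdeal σ R (β.degree + 1) := by
  have hv1 : ∀ i, v i ∈ orderIdeal σ R 1 := fun i => mem_orderIdeal_one_of_sub_X_mem (hv i)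
  have hpow : ∀ (i : σ) (m : ℕ), v i ^ m - X i ^ m ∈ orderIdeal σ R (m + 1) := fun i m => by
    simpa using prod_sub_prod_mem_orderIdeal (Finset.range m) (x := fun _ => v i)
      (y := fun _ => X i) (n := fun _ => 1) (fun _ => hv1 i) (fun _ => X_mem_orderIdeal_one i)
      (fun _ => hv i)
  have hpow_mem : ∀ (y : MvPowerSeries σ R) (m : ℕ), y ∈ orderIdeal σ R 1 →
      y ^ m ∈ orderIdeal σ R m := fun y m hy => by
    simpa using prod_mem_orderIdeal (Finset.range m) (x := fun _ => y) (n := fun _ => 1)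
      fun _ => hy
  simpa [Finsupp.prod, Finsupp.degree_apply] using prod_sub_prod_mem_orderIdeal β.support
    (fun i => hpow_mem _ (β i) (hv1 i)) (fun i => hpow_mem _ (β i) (X_mem_orderIdeal_one i))
    (fun i => hpow i (β i))

end OrderIdeal

section Subst

variable {σ R : Type*} [CommRing R] [Finite σ] {v : σ → MvPowerSeries σ R}

theorem hasSubst_of_sub_X_mem (hv : ∀ i, v i - X i ∈ orderIdeal σ R 2) : HasSubst v :=
  hasSubst_of_constantCoeff_zero fun i =>
    mem_orderIdeal_one_iff.mp (mem_orderIdeal_one_of_sub_X_mem (hv i))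

theorem subst_sub_self_mem_orderIdeal (hv : ∀ i, v i - X i ∈ orderIdeal σ R 2)
    {f : MvPowerSeries σ R} {d : ℕ} (hf : f ∈ orderIdeal σ R d) : subst v f - f ∈ orderIdeal σ R (d + 1) := by
  have hs := hasSubst_of_sub_X_mem hv
  refine mem_orderIdeal_iff.mpr fun γ hγ => ?_
  have hX := coeff_subst (HasSubst.X (S := R)) f γ
  rw [subst_self, id] at hX
  rw [map_sub, coeff_subst hs, hX, ← finsum_sub_distrib
    (coeff_subst_finite hs f γ) (coeff_subst_finite HasSubst.X f γ)]
  refine finsum_eq_zero_of_forall_eq_zero fun β => ?_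
  rw [← smul_sub, ← map_sub]
  by_cases hβ : β.degree < d
  · rw [mem_orderIdeal_iff.mp hf β hβ, zero_smul]
  · rw [mem_orderIdeal_iff.mp (prod_pow_sub_prod_X_pow_mem_orderIdeal hv β) γ (by omega), smul_zero]

theorem bijective_substAlgHom (hv : ∀ i, v i - X i ∈ orderIdeal σ R 2) :
    Function.Bijective (substAlgHom (R := R) (hasSubst_of_sub_X_mem hv)) :=
  bijective_of_sub_mem_orderIdeal_succ (substAlgHom (hasSubst_of_sub_X_mem hv)).toAddMonoidHom
    fun _ _ hf => by simpa using subst_sub_self_mem_orderIdeal hv hf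

end Subst

section FinVars

variable {R : Type*} [CommRing R] {n : ℕ}

theorem subst_eq_self_of_highVars {r : ℕ} {v : Fin n → MvPowerSeries (Fin n) R}
    (hv : HasSubst v) (hvX : ∀ i : Fin n, r ≤ (i : ℕ) → v i = X i)
    {h : MvPowerSeries (Fin n) R} (hh : highVars r h) : subst v h = h := by
  ext γ
  have hX := coeff_subst (HasSubst.X (S := R)) h γ
  rw [subst_self, id] at hX
  rw [coeff_subst hv, hX]
  refine finsum_congr fun β => ?_
  by_cases hβ : coeff β h = 0
  · simp [hβ]
  refine congrArg _ (congrArg _ (Finsupp.prod_congr fun i hi => ?_))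
  rw [hvX i (not_lt.mp fun hir => Finsupp.mem_support_iff.mp hi (hh β hβ i hir))]

theorem highVars_zero (r : ℕ) : highVars r (0 : MvPowerSeries (Fin n) R) :=
  fun _ h => absurd (map_zero _) h

/-- For `i < r`, `X i * lowQuot r e i` is the part of `e` made of the monomials whose smallest
variable is `X i`. -/
def lowQuot (r : ℕ) (e : MvPowerSeries (Fin n) R) (i : Fin n) : MvPowerSeries (Fin n) R :=
  fun δ => if (i : ℕ) < r ∧ ∀ j < i, δ j = 0 then coeff (δ + Finsupp.single i 1) e else 0

theorem coeff_lowQuot (r : ℕ) (e : MvPowerSeries (Fin n) R) (i : Fin n) (δ : Fin n →₀ ℕ) :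
    coeff δ (lowQuot r e i) =
      if (i : ℕ) < r ∧ ∀ j < i, δ j = 0 then coeff (δ + Finsupp.single i 1) e else 0 :=
  rfl

theorem lowQuot_of_le {r : ℕ} (e : MvPowerSeries (Fin n) R) {i : Fin n} (hi : r ≤ (i : ℕ)) :
    lowQuot r e i = 0 := by
  ext δ
  simp [coeff_lowQuot, hi.not_gt]

theorem coeff_X_mul_lowQuot (r : ℕ) (e : MvPowerSeries (Fin n) R) (i : Fin n) (γ : Fin n →₀ ℕ) :
    coeff γ (X i * lowQuot r e i) =
      if (i : ℕ) < r ∧ γ i ≠ 0 ∧ ∀ j < i, γ j = 0 then coeff γ e else 0 := by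
  rw [X_def, coeff_monomial_mul, one_mul, coeff_lowQuot]
  by_cases hγi : γ i = 0
  · simp [hγi, Finsupp.single_le_iff]
  have hle : Finsupp.single i 1 ≤ γ := Finsupp.single_le_iff.mpr (Nat.one_le_iff_ne_zero.mpr hγi)
  have hsingle : ∀ j < i, Finsupp.single i 1 j = 0 := fun j hj => Finsupp.single_eq_of_ne' hj.ne'
  simp +contextual [hle, hγi, tsub_add_cancel_of_le hle, hsingle]

theorem highVars_sub_sum_X_mul_lowQuot (r : ℕ) (e : MvPowerSeries (Fin n) R) :
    highVars r (e - ∑ i, X i * lowQuot r e i) := by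
  intro β hβ i₁ hi₁
  by_contra hβi₁
  apply hβ
  let S : Set (Fin n) := {j | (j : ℕ) < r ∧ β j ≠ 0}
  let i₀ := wellFounded_lt.min S ⟨i₁, hi₁, hβi₁⟩
  have hi₀ : i₀ ∈ S := wellFounded_lt.min_mem S _
  have hfirst : ∀ j : Fin n, ((j : ℕ) < r ∧ β j ≠ 0 ∧ ∀ k < j, β k = 0) ↔ j = i₀ := by
    refine fun j => ⟨fun ⟨hjr, hβj, hbelow⟩ => ?_, ?_⟩
    · refine le_antisymm ?_ (wellFounded_lt.min_le (show j ∈ S from ⟨hjr, hβj⟩))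
      exact not_lt.mp fun hlt => hi₀.2 (hbelow i₀ hlt)
    · rintro rfl
      refine ⟨hi₀.1, hi₀.2, fun k hk => by_contra fun hβk => ?_⟩
      exact wellFounded_lt.not_lt_min S (show k ∈ S from ⟨(Fin.lt_def.mp hk).trans hi₀.1, hβk⟩) hk
  simp only [map_sub, map_sum, coeff_X_mul_lowQuot, hfirst, Finset.sum_ite_eq',
    Finset.mem_univ, if_true, sub_self]

theorem lowQuot_mem_orderIdeal {r d : ℕ} {e H : MvPowerSeries (Fin n) R} (hH : highVars r H)
    (he : e - H ∈ orderIdeal (Fin n) R (d + 1)) (i : Fin n) :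
    lowQuot r e i ∈ orderIdeal (Fin n) R d := by
  refine mem_orderIdeal_iff.mpr fun δ hδ => ?_
  rw [coeff_lowQuot]
  split_ifs with hi
  · have hHδ : coeff (δ + Finsupp.single i 1) H = 0 := by
      by_contra hne
      simpa using hH _ hne i hi.1
    have := mem_orderIdeal_iff.mp he (δ + Finsupp.single i 1) (by simpa using hδ)
    rwa [map_sub, hHδ, sub_zero] at this
  · rfl

theorem highVars_of_forall_exists_sub_mem {r : ℕ} {e : MvPowerSeries (Fin n) R}
    (he : ∀ d, ∃ H, highVars r H ∧ e - H ∈ orderIdeal (Fin n) R d) : highVars r e := by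
  intro β hβ i hi
  obtain ⟨H, hH, heH⟩ := he (β.degree + 1)
  have hcoeff := mem_orderIdeal_iff.mp heH β (by omega)
  rw [map_sub, sub_eq_zero] at hcoeff
  exact hH β (hcoeff ▸ hβ) i hi

theorem mIdeal_eq_orderIdeal_one : mIdeal R n = orderIdeal (Fin n) R 1 :=
  Ideal.ext fun _ => RingHom.mem_ker.trans mem_orderIdeal_one_iff.symm

theorem mIdeal_pow_le_orderIdeal (d : ℕ) : mIdeal R n ^ d ≤ orderIdeal (Fin n) R d := by
  induction d with
  | zero => simp [orderIdeal_zero]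
  | succ d ih =>
    rw [pow_succ, Ideal.mul_le]
    exact fun f hf g hg => mul_mem_orderIdeal (ih hf) (by rwa [mIdeal_eq_orderIdeal_one] at hg)

theorem orderIdeal_le_mIdeal_pow (d : ℕ) : orderIdeal (Fin n) R d ≤ mIdeal R n ^ d := by
  induction d with
  | zero => simp
  | succ d ih =>
    intro e he
    have hlow : e - ∑ i, X i * lowQuot n e i = 0 := by
      have hmem : e - ∑ i, X i * lowQuot n e i ∈ orderIdeal (Fin n) R 1 :=
        sub_mem (orderIdeal_antitone (by omega) he) <| Ideal.sum_mem _ fun i _ =>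
          Ideal.mul_mem_right _ _ (X_mem_orderIdeal_one i)
      ext β
      by_contra hβ
      have hβ0 : β = 0 := Finsupp.ext fun i => highVars_sub_sum_X_mul_lowQuot n e β hβ i i.isLt
      exact hβ (mem_orderIdeal_iff.mp hmem β (by simp [hβ0]))
    rw [sub_eq_zero.mp hlow, pow_succ']
    refine Ideal.sum_mem _ fun i _ => Ideal.mul_mem_mul (constantCoeff_X i) (ih ?_)
    exact lowQuot_mem_orderIdeal (highVars_zero n) (by simpa using he) i

theorem sub_part2_mem_orderIdeal {f : MvPowerSeries (Fin n) R}
    (hf : f ∈ orderIdeal (Fin n) R 2) : f - part2 f ∈ orderIdeal (Fin n) R 3 := by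
  refine mem_orderIdeal_iff.mpr fun γ hγ => ?_
  have hpart : coeff γ (part2 f) = if γ.degree = 2 then coeff γ f else 0 := rfl
  rw [map_sub, hpart]
  split_ifs with h2
  · exact sub_self _
  · rw [sub_zero]
    exact mem_orderIdeal_iff.mp hf γ (by omega)

def quadForm (a : Fin n → R) (r : ℕ) (U : Fin n → MvPowerSeries (Fin n) R) :
    MvPowerSeries (Fin n) R :=
  ∑ i : Fin n, if (i : ℕ) < r then C (a i) * U i ^ 2 else 0

theorem map_quadForm {F : Type*} [FunLike F (MvPowerSeries (Fin n) R) (MvPowerSeries (Fin n) R)]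
    [AlgHomClass F R (MvPowerSeries (Fin n) R) (MvPowerSeries (Fin n) R)] (ψ : F)
    (a : Fin n → R) (r : ℕ) (U : Fin n → MvPowerSeries (Fin n) R) :
    ψ (quadForm a r U) = quadForm a r (fun i => ψ (U i)) := by
  simp only [quadForm, map_sum, apply_ite ψ, map_mul, map_pow, map_zero, c_eq_algebraMap,
    AlgHomClass.commutes]

theorem quadForm_sub_quadForm_mem (a : Fin n → R) (r : ℕ) {U V : Fin n → MvPowerSeries (Fin n) R}
    {d : ℕ} (hU : ∀ i, U i ∈ orderIdeal (Fin n) R 1) (hV : ∀ i, V i ∈ orderIdeal (Fin n) R 1)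
    (hUV : ∀ i, U i - V i ∈ orderIdeal (Fin n) R d) :
    quadForm a r U - quadForm a r V ∈ orderIdeal (Fin n) R (d + 1) := by
  rw [quadForm, quadForm, ← Finset.sum_sub_distrib]
  refine Ideal.sum_mem _ fun i _ => ?_
  split_ifs
  · rw [show C (a i) * U i ^ 2 - C (a i) * V i ^ 2 = C (a i) * ((U i - V i) * (U i + V i)) by ring]
    exact Ideal.mul_mem_left _ _ (mul_mem_orderIdeal (hUV i) (add_mem (hU i) (hV i)))
  · simp

end FinVars

section Morse

variable {k : Type*} [Field k] {n r : ℕ} {a : Fin n → k} {f : MvPowerSeries (Fin n) k}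

theorem quadForm_add_sub_mem_orderIdeal (h2 : (2 : k) ≠ 0) (ha : ∀ i : Fin n, (i : ℕ) < r → a i ≠ 0)
    {U w : Fin n → MvPowerSeries (Fin n) k} {q : ℕ}
    (hU : ∀ i, U i - X i ∈ orderIdeal (Fin n) k 2) (hw : ∀ i, w i ∈ orderIdeal (Fin n) k (q + 2))
    (hw0 : ∀ i : Fin n, r ≤ (i : ℕ) → w i = 0) :
    quadForm a r (fun i => U i + C ((2 * a i)⁻¹) * w i) - quadForm a r U - ∑ i, X i * w i ∈
      orderIdeal (Fin n) k (q + 4) := by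
  simp only [quadForm, ← Finset.sum_sub_distrib]
  refine Ideal.sum_mem _ fun i _ => ?_
  by_cases hi : (i : ℕ) < r
  · have hinv : C (a i) * C ((2 * a i)⁻¹) * 2 = (1 : MvPowerSeries (Fin n) k) := by
      rw [← map_mul, ← map_ofNat C 2, ← map_mul, ← map_one C]
      congr 1
      field_simp [ha i hi]
    rw [if_pos hi, if_pos hi, show C (a i) * (U i + C ((2 * a i)⁻¹) * w i) ^ 2 - C (a i) * U i ^ 2
        - X i * w i = (U i - X i) * w i + C (a i) * (C ((2 * a i)⁻¹) * w i) ^ 2 by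
      linear_combination (U i * w i) * hinv]
    have hc : C ((2 * a i)⁻¹) * w i ∈ orderIdeal (Fin n) k (q + 2) := Ideal.mul_mem_left _ _ (hw i)
    refine add_mem ?_ (Ideal.mul_mem_left _ _ ?_)
    · exact orderIdeal_antitone (by omega) (mul_mem_orderIdeal (hU i) (hw i))
    · rw [pow_two]
      exact orderIdeal_antitone (by omega) (mul_mem_orderIdeal hc hc)
  · simp [hi, hw0 i (not_lt.mp hi)]

def morseSeq (a : Fin n → k) (r : ℕ) (f : MvPowerSeries (Fin n) k) :
    ℕ → Fin n → MvPowerSeries (Fin n) k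
  | 0 => X
  | q + 1 => fun i =>
    morseSeq a r f q i + C ((2 * a i)⁻¹) * lowQuot r (f - quadForm a r (morseSeq a r f q)) i

theorem morseSeq_of_le (q : ℕ) {i : Fin n} (hi : r ≤ (i : ℕ)) : morseSeq a r f q i = X i := by
  induction q with
  | zero => rfl
  | succ q ih => simp [morseSeq, ih, lowQuot_of_le _ hi]

variable (h2 : (2 : k) ≠ 0) (ha : ∀ i : Fin n, (i : ℕ) < r → a i ≠ 0)
  (hf : f - quadForm a r X ∈ orderIdeal (Fin n) k 3)
include h2 ha hf

theorem morseSeq_spec (q : ℕ) :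
    (∀ i, morseSeq a r f q i - X i ∈ orderIdeal (Fin n) k 2) ∧
      ∃ H, highVars r H ∧
        f - quadForm a r (morseSeq a r f q) - H ∈ orderIdeal (Fin n) k (q + 3) := by
  induction q with
  | zero => exact ⟨fun i => by simp [morseSeq], 0, highVars_zero r, by simpa [morseSeq] using hf⟩
  | succ q ih =>
    obtain ⟨hU, H, hH, hE⟩ := ih
    have hw := lowQuot_mem_orderIdeal hH hE
    refine ⟨fun i => ?_, _, highVars_sub_sum_X_mul_lowQuot r (f - quadForm a r (morseSeq a r f q)),
      ?_⟩
    · rw [morseSeq, add_sub_right_comm]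
      exact add_mem (hU i) (orderIdeal_antitone (by omega) (Ideal.mul_mem_left _ _ (hw i)))
    · convert neg_mem (quadForm_add_sub_mem_orderIdeal h2 ha hU hw fun i hi => lowQuot_of_le _ hi)
        using 1
      rw [morseSeq]
      ring

theorem morseSeq_succ_sub_mem (i : Fin n) (q : ℕ) :
    morseSeq a r f (q + 1) i - morseSeq a r f q i ∈ orderIdeal (Fin n) k (q + 2) := by
  obtain ⟨-, H, hH, hE⟩ := morseSeq_spec h2 ha hf q
  rw [morseSeq, add_sub_cancel_left]
  exact Ideal.mul_mem_left _ _ (lowQuot_mem_orderIdeal hH hE i)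

theorem exists_sub_quadForm_highVars :
    ∃ u : Fin n → MvPowerSeries (Fin n) k, (∀ i, u i - X i ∈ orderIdeal (Fin n) k 2) ∧
      (∀ i : Fin n, r ≤ (i : ℕ) → u i = X i) ∧ highVars r (f - quadForm a r u) ∧
      f - quadForm a r u ∈ orderIdeal (Fin n) k 3 := by
  choose u hu using fun i => exists_sub_mem_orderIdeal (fun q => morseSeq a r f q i) 2
    (morseSeq_succ_sub_mem h2 ha hf i)
  have hu1 : ∀ i, u i ∈ orderIdeal (Fin n) k 1 := fun i => mem_orderIdeal_one_of_sub_X_mem (hu i 0)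
  refine ⟨u, fun i => hu i 0, fun i hi => ?_, highVars_of_forall_exists_sub_mem fun d => ?_, ?_⟩
  · refine (sub_eq_zero.mp (eq_zero_of_forall_mem_orderIdeal fun d => ?_))
    simpa [morseSeq_of_le _ hi] using orderIdeal_antitone (by omega) (hu i d)
  · obtain ⟨hU, H, hH, hE⟩ := morseSeq_spec h2 ha hf d
    refine ⟨H, hH, orderIdeal_antitone (by omega : d ≤ d + 3) ?_⟩
    have hclose : quadForm a r (morseSeq a r f d) - quadForm a r u ∈ orderIdeal (Fin n) k (d + 3) :=
      quadForm_sub_quadForm_mem a r (fun i => mem_orderIdeal_one_of_sub_X_mem (hU i)) hu1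
        fun i => neg_sub (u i) _ ▸ neg_mem (hu i d)
    convert add_mem hE hclose using 1
    ring
  · have hclose := quadForm_sub_quadForm_mem a r (X_mem_orderIdeal_one (R := k)) hu1
      fun i => neg_sub (u i) _ ▸ neg_mem (hu i 0)
    convert add_mem hf hclose using 1
    ring

end Morse

end MvPowerSeries

theorem stmt5_general {k : Type*} [Field k] (h2 : (2 : k) ≠ 0) {n r : ℕ}
    (f : MvPowerSeries (Fin n) k) (hf : f ∈ mIdeal k n ^ 2)
    (a : Fin n → k) (ha : ∀ i : Fin n, (i : ℕ) < r → a i ≠ 0)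
    (hf2 : part2 f = ∑ i : Fin n, if (i : ℕ) < r then (C (a i) : MvPowerSeries (Fin n) k) * X i ^ 2 else 0) :
    ∃ φ : MvPowerSeries (Fin n) k ≃ₐ[k] MvPowerSeries (Fin n) k,
      (∀ i : Fin n, r ≤ (i : ℕ) → φ (X i) = X i) ∧
      ∃ h : MvPowerSeries (Fin n) k, highVars r h ∧ h ∈ mIdeal k n ^ 3 ∧
        φ f = (∑ i : Fin n, if (i : ℕ) < r then (C (a i) : MvPowerSeries (Fin n) k) * X i ^ 2 else 0) + h := by
  have hfQ : f - quadForm a r X ∈ orderIdeal (Fin n) k 3 := by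
    have := sub_part2_mem_orderIdeal (mIdeal_pow_le_orderIdeal 2 hf)
    rw [hf2] at this
    exact this
  obtain ⟨u, hu, huX, hh, hh3⟩ := exists_sub_quadForm_highVars h2 ha hfQ
  have hs := hasSubst_of_sub_X_mem hu
  let ψ := AlgEquiv.ofBijective _ (bijective_substAlgHom hu)
  have hψ : ∀ g, ψ g = subst u g := substAlgHom_apply hs
  refine ⟨ψ.symm, fun i hi => ?_, f - quadForm a r u, hh, orderIdeal_le_mIdeal_pow 3 hh3, ?_⟩
  · rw [AlgEquiv.symm_apply_eq, hψ, subst_X hs, huX i hi]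
  · change _ = quadForm a r X + _
    rw [AlgEquiv.symm_apply_eq, map_add, map_quadForm, hψ (f - _),
      subst_eq_self_of_highVars hs huX hh]
    simp only [hψ, subst_X hs, add_sub_cancel]

/-- Formal Morse lemma in characteristic ≠ 2: if `f ∈ m²` has degree-2 part
`f₂ = Σ_{i<r} aᵢxᵢ²` with all `aᵢ ≠ 0`, then there is a `k`-algebra automorphism `φ` of `R`
fixing `x_{r+1},…,xₙ` with `φ(f) = Σ_{i<r} aᵢxᵢ² + h(x_{r+1},…,xₙ)` for some `h ∈ m³`. -/
theorem stmt5 {k : Type*} [Field k] (h2 : (2 : k) ≠ 0) {n r : ℕ} (hr : r ≤ n)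
    (f : MvPowerSeries (Fin n) k) (hf : f ∈ mIdeal k n ^ 2)
    (a : Fin n → k) (ha : ∀ i : Fin n, (i : ℕ) < r → a i ≠ 0)
    (hf2 : part2 f = ∑ i : Fin n, if (i : ℕ) < r then (C (a i) : MvPowerSeries (Fin n) k) * X i ^ 2 else 0) :
    ∃ φ : MvPowerSeries (Fin n) k ≃ₐ[k] MvPowerSeries (Fin n) k,
      (∀ i : Fin n, r ≤ (i : ℕ) → φ (X i) = X i) ∧
      ∃ h : MvPowerSeries (Fin n) k, highVars r h ∧ h ∈ mIdeal k n ^ 3 ∧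
        φ f = (∑ i : Fin n, if (i : ℕ) < r then (C (a i) : MvPowerSeries (Fin n) k) * X i ^ 2 else 0) + h :=
  stmt5_general h2 f hf a ha hf2
end
end

section
/- Let g : U → V be a continuous map of topological spaces, where U has only finitely many irreducible components, and let W be a closed subset of U such that for every y ∈ g(U): (i) the fiber g⁻¹(y) is irreducible, and (ii) g⁻¹(y) ∩ W ≠ g⁻¹(y). Then W is not an irreducible component of U. -/
/-- Let `g : U → V` be a continuous map of topological spaces, where `U` has only finitely
many irreducible components, and let `W` be a closed subset of `U` such that for every
`y ∈ g(U)`: (i) the fiber `g⁻¹(y)` is irreducible, and (ii) `g⁻¹(y) ∩ W ≠ g⁻¹(y)`.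
Then `W` is not an irreducible component of `U`. -/
theorem stmt11 {U V : Type*} [TopologicalSpace U] [TopologicalSpace V]
    (g : U → V) (hg : Continuous g) (hfin : (irreducibleComponents U).Finite)
    (W : Set U) (hW : IsClosed W)
    (h1 : ∀ y ∈ Set.range g, IsIrreducible (g ⁻¹' {y}))
    (h2 : ∀ y ∈ Set.range g, g ⁻¹' {y} ∩ W ≠ g ⁻¹' {y}) :
    W ∉ irreducibleComponents U := by
  intro hmem
  have hWirr : IsIrreducible W := hmem.1
  -- W is not contained in the union of the other components
  have hother : ¬ W ⊆ ⋃₀ (irreducibleComponents U \ {W}) := by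
    intro hsub
    have hfin' : (irreducibleComponents U \ {W}).Finite := hfin.subset Set.diff_subset
    obtain ⟨Z, hZ, hWZ⟩ := (isIrreducible_iff_sUnion_isClosed.mp hWirr) hfin'.toFinset
      (fun z hz => isClosed_of_mem_irreducibleComponents z
        ((hfin'.mem_toFinset.mp hz).1))
      (by rwa [Set.Finite.coe_toFinset])
    rw [Set.Finite.mem_toFinset] at hZ
    have : W = Z := le_antisymm hWZ (hmem.2 hZ.1.1 hWZ)
    exact hZ.2 this.symm
  obtain ⟨x, hxW, hx⟩ := Set.not_subset.mp hother
  -- the fiber through x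
  set F := g ⁻¹' {g x} with hF
  have hyrange : g x ∈ Set.range g := ⟨x, rfl⟩
  have hFirr : IsIrreducible F := h1 _ hyrange
  -- F is contained in the union of all components
  have hFsub : F ⊆ ⋃₀ (irreducibleComponents U) := fun z _ =>
    ⟨irreducibleComponent z, irreducibleComponent_mem_irreducibleComponents z,
      mem_irreducibleComponent⟩
  obtain ⟨Z, hZ, hFZ⟩ := (isIrreducible_iff_sUnion_isClosed.mp hFirr) hfin.toFinset
    (fun z hz => isClosed_of_mem_irreducibleComponents z (hfin.mem_toFinset.mp hz))
    (by rwa [Set.Finite.coe_toFinset])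
  rw [Set.Finite.mem_toFinset] at hZ
  have hxF : x ∈ F := rfl
  have hZW : Z = W := by
    by_contra hne
    exact hx ⟨Z, ⟨hZ, hne⟩, hFZ hxF⟩
  apply h2 _ hyrange
  exact Set.inter_eq_left.mpr (hZW ▸ hFZ) |>.symm ▸ rfl
end

section
/- Let p be a prime, m ≥ 2 an integer, and set m̄ = m/2 if m is even and m̄ = (m+1)/2 if m is odd. Let f ∈ ℤ[x₁,…,xₙ] and x₀ ∈ ℤⁿ be such that p^{m−1} divides f(x₀) and there exists i with 2·v_p((∂f/∂xᵢ)(x₀)) < m−1. Then Σ_{y ∈ {0,1,…,p^{m−m̄}−1}ⁿ} exp(2πi·f(x₀ + p^{m̄}y)/p^m) = 0. -/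
/-!
Write `e_N(t) = exp(2πi t / N)`, the standard additive character `ZMod.stdAddChar` of `ℤ/N`.
Because `p ^ m` divides `p ^ (2 * m̄)`, first-order Taylor expansion of `f` around `x₀` is exact
modulo `p ^ m` on the points `x₀ + p ^ m̄ * y`, and `p ^ m = p ^ m̄ * p ^ (m - m̄)`. Hence the phase
factors as `e_{p^m}(f(x₀)) * ∏ᵢ e_{p^(m-m̄)}(∂ᵢf(x₀) * yᵢ)`, the sum is a product of complete
character sums modulo `p ^ (m - m̄)`, and the one for the index `i` with `2 * v_p(∂ᵢf(x₀)) < m - 1`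
vanishes because then `v_p(∂ᵢf(x₀)) < m - m̄`.
-/

open MvPolynomial

/-- The `p`-adic valuation `v_p : ℤ → ℕ∞`, with `v_p 0 = ⊤`. -/
def vp (p : ℕ) (a : ℤ) : ℕ∞ := if a = 0 then ⊤ else (padicValInt p a : ℕ∞)

lemma sq_dvd_eval_add_sub_sum_pderiv {R σ : Type*} [CommRing R] [Fintype σ] {q : R}
    (f : MvPolynomial σ R) (a t : σ → R) (ht : ∀ i, q ∣ t i) :
    q ^ 2 ∣ eval (a + t) f - eval a f - ∑ i, eval a (pderiv i f) * t i := by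
  classical
  induction f using MvPolynomial.induction_on with
  | C c => simp
  | add f g hf hg =>
    convert dvd_add hf hg using 1
    simp only [map_add, add_mul, Finset.sum_add_distrib]
    ring
  | mul_X f j hf =>
    set r := eval (a + t) f - eval a f - ∑ i, eval a (pderiv i f) * t i
    set D := ∑ i, eval a (pderiv i f) * t i
    have hD : q ∣ D := Finset.dvd_sum fun i _ => (ht i).mul_left _
    have hexpand : eval (a + t) (f * X j) - eval a (f * X j)
        - ∑ i, eval a (pderiv i (f * X j)) * t i = r * (a j + t j) + D * t j := by
      simp only [r, D, pderiv_mul, pderiv_X, map_add, map_mul, eval_X, Pi.add_apply,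
        Pi.single_apply, apply_ite (eval a), map_zero, mul_ite, mul_one, mul_zero, add_mul,
        Finset.sum_add_distrib, ite_mul, zero_mul, Finset.sum_ite_eq, Finset.mem_univ, if_true]
      simp only [mul_right_comm _ (a j), ← Finset.sum_mul]
      ring
    rw [hexpand, sq]
    exact dvd_add (dvd_mul_of_dvd_left (sq q ▸ hf) _) (mul_dvd_mul hD (ht j))

lemma AddChar.map_sum_eq_prod {ι A M : Type*} [AddCommMonoid A] [CommMonoid M] (ψ : AddChar A M)
    (s : Finset ι) (x : ι → A) : ψ (∑ i ∈ s, x i) = ∏ i ∈ s, ψ (x i) := by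
  induction s using Finset.cons_induction <;> simp_all [AddChar.map_add_eq_mul]

namespace ZMod

lemma stdAddChar_intCast_mul {M q N : ℕ} [NeZero M] [NeZero N] (hM : M = q * N) (a : ℤ) :
    stdAddChar ((q * a : ℤ) : ZMod M) = stdAddChar (a : ZMod N) := by
  have hq : (q : ℂ) ≠ 0 := Nat.cast_ne_zero.2 (left_ne_zero_of_mul (hM ▸ NeZero.ne M))
  rw [stdAddChar_coe, stdAddChar_coe, hM]
  push_cast
  field_simp

lemma sum_fin_stdAddChar_intCast_mul_eq_zero {N : ℕ} [NeZero N] {d : ℤ} (hd : ¬ (N : ℤ) ∣ d) :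
    ∑ j : Fin N, stdAddChar ((d * (j : ℕ) : ℤ) : ZMod N) = 0 := by
  classical
  obtain ⟨n, rfl⟩ : ∃ n, N = n + 1 := Nat.exists_eq_succ_of_ne_zero (NeZero.ne N)
  -- `ZMod (n + 1)` is `Fin (n + 1)`, so this is a complete character sum over `ZMod (n + 1)`.
  have hsum := AddChar.sum_mulShift (d : ZMod (n + 1)) (isPrimitive_stdAddChar (n + 1))
  rw [if_neg (by rwa [intCast_zmod_eq_zero_iff_dvd]), Nat.cast_zero] at hsum
  rw [← hsum]
  refine Fintype.sum_congr _ _ fun j => ?_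
  push_cast
  rw [mul_comm]
  congr 2
  exact natCast_zmod_val (n := n + 1) j

lemma stdAddChar_eval_add_mul {σ : Type*} [Fintype σ] {M q N : ℕ} [NeZero M] [NeZero N]
    (hM : M = q * N) (hNq : N ∣ q) (f : MvPolynomial σ ℤ) (a y : σ → ℤ) :
    stdAddChar ((eval (fun i => a i + q * y i) f : ℤ) : ZMod M) =
      stdAddChar ((eval a f : ℤ) : ZMod M) *
        ∏ i, stdAddChar ((eval a (pderiv i f) * y i : ℤ) : ZMod N) := by
  have hMq : (M : ℤ) ∣ (q : ℤ) ^ 2 := by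
    rw [hM, sq]
    exact_mod_cast mul_dvd_mul_left q hNq
  have htaylor := hMq.trans <| sq_dvd_eval_add_sub_sum_pderiv f a (fun i => q * y i)
    fun i => dvd_mul_right _ _
  rw [sub_sub] at htaylor
  have hcast : ((eval (fun i => a i + q * y i) f : ℤ) : ZMod M) =
      ((eval a f + ∑ i, eval a (pderiv i f) * (q * y i) : ℤ) : ZMod M) :=
    (intCast_eq_intCast_iff_dvd_sub _ _ _).2 (dvd_sub_comm.1 htaylor)
  rw [hcast, Int.cast_add, Int.cast_sum, AddChar.map_add_eq_mul, AddChar.map_sum_eq_prod]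
  simp only [mul_left_comm _ (q : ℤ), stdAddChar_intCast_mul hM]

lemma sum_stdAddChar_eval_add_mul_eq_zero {σ : Type*} [Fintype σ] [DecidableEq σ]
    {M q N : ℕ} [NeZero M] [NeZero N] (hM : M = q * N) (hNq : N ∣ q) (f : MvPolynomial σ ℤ) (a : σ → ℤ) {i₀ : σ}
    (hi₀ : ¬ (N : ℤ) ∣ eval a (pderiv i₀ f)) :
    ∑ y : σ → Fin N, stdAddChar ((eval (fun i => a i + q * ((y i : ℕ) : ℤ)) f : ℤ) : ZMod M) =
      0 := by
  simp_rw [stdAddChar_eval_add_mul hM hNq]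
  rw [← Finset.mul_sum, ← Fintype.prod_sum fun i (j : Fin N) =>
      stdAddChar ((eval a (pderiv i f) * ((j : ℕ) : ℤ) : ℤ) : ZMod N),
    Finset.prod_eq_zero (Finset.mem_univ i₀) (sum_fin_stdAddChar_intCast_mul_eq_zero hi₀),
    mul_zero]

end ZMod

lemma not_pow_dvd_of_vp_lt {p : ℕ} (hp : p ≠ 1) {a : ℤ} {k : ℕ} (h : vp p a < k) :
    ¬ (p : ℤ) ^ k ∣ a := by
  unfold vp at h
  split_ifs at h with ha
  · simp at h
  · rw [padicValInt_dvd_iff_of_ne_one hp]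
    norm_cast at h
    omega

theorem stmt12_general (p : ℕ) (hp : p.Prime) (m : ℕ) (mbar : ℕ)
    (hmbar_even : Even m → mbar = m / 2) (hmbar_odd : ¬ Even m → mbar = (m + 1) / 2)
    {n : ℕ} (f : MvPolynomial (Fin n) ℤ) (x₀ : Fin n → ℤ)
    (hder : ∃ i : Fin n,
      2 * vp p (MvPolynomial.eval x₀ (MvPolynomial.pderiv i f)) < ((m - 1 : ℕ) : ℕ∞)) :
    ∑ y : Fin n → Fin (p ^ (m - mbar)),
      Complex.exp (2 * Real.pi * Complex.I *
        ((MvPolynomial.eval (fun i => x₀ i + (p : ℤ) ^ mbar * ((y i : ℕ) : ℤ)) f : ℤ) : ℂ) /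
          (p : ℂ) ^ m) = 0 := by
  obtain ⟨i₀, hi₀⟩ := hder
  have hmbar : mbar = (m + 1) / 2 := by
    by_cases he : Even m
    · rw [hmbar_even he]
      obtain ⟨r, rfl⟩ := he
      omega
    · exact hmbar_odd he
  have hvp : vp p (eval x₀ (pderiv i₀ f)) < (m - mbar : ℕ) := by
    cases h : vp p (eval x₀ (pderiv i₀ f)) using ENat.recTopCoe <;> rw [h] at hi₀
    · simp at hi₀
    · norm_cast at hi₀ ⊢
      omega
  have : NeZero p := ⟨hp.ne_zero⟩
  rw [← ZMod.sum_stdAddChar_eval_add_mul_eq_zero (M := p ^ m) (q := p ^ mbar) (N := p ^ (m - mbar))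
    (by rw [← pow_add]; congr 1; omega) (pow_dvd_pow p (by omega)) f x₀
    (by exact_mod_cast not_pow_dvd_of_vp_lt hp.ne_one hvp)]
  refine Fintype.sum_congr _ _ fun y => ?_
  rw [ZMod.stdAddChar_coe]
  push_cast
  rfl

/-- Let `p` be prime, `m ≥ 2`, and `m̄ = m/2` if `m` is even, `m̄ = (m+1)/2` if `m` is odd.
Let `f ∈ ℤ[x₁,…,xₙ]` and `x₀ ∈ ℤⁿ` with `p^{m−1} ∣ f(x₀)` and `2·v_p((∂f/∂xᵢ)(x₀)) < m−1`
for some `i`.  Then `Σ_{y ∈ {0,…,p^{m−m̄}−1}ⁿ} e(f(x₀ + p^m̄ y)/p^m) = 0`. -/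
theorem stmt12 (p : ℕ) (hp : p.Prime) (m : ℕ) (hm : 2 ≤ m) (mbar : ℕ)
    (hmbar_even : Even m → mbar = m / 2) (hmbar_odd : ¬ Even m → mbar = (m + 1) / 2)
    {n : ℕ} (f : MvPolynomial (Fin n) ℤ) (x₀ : Fin n → ℤ)
    (hdiv : (p : ℤ) ^ (m - 1) ∣ MvPolynomial.eval x₀ f)
    (hder : ∃ i : Fin n,
      2 * vp p (MvPolynomial.eval x₀ (MvPolynomial.pderiv i f)) < ((m - 1 : ℕ) : ℕ∞)) :
    ∑ y : Fin n → Fin (p ^ (m - mbar)),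
      Complex.exp (2 * Real.pi * Complex.I *
        ((MvPolynomial.eval (fun i => x₀ i + (p : ℤ) ^ mbar * ((y i : ℕ) : ℤ)) f : ℤ) : ℂ) /
          (p : ℂ) ^ m) = 0 :=
  stmt12_general p hp m mbar hmbar_even hmbar_odd f x₀ hder
end

section
/- Let p be a prime, m ≥ 2 an integer, and f ∈ ℤ[x₁,…,xₙ]. Then Σ_{x ∈ S} exp(2πi·f(x)/p^m) = 0, where S is the set of x ∈ {0,1,…,p^m−1}ⁿ such that 2·v_p((∂f/∂xᵢ)(x)) < m−1 for at least one index i. Equivalently, the full exponential sum Σ_{x ∈ {0,…,p^m−1}ⁿ} exp(2πi·f(x)/p^m) equals the sum restricted to those x with 2·v_p((∂f/∂xᵢ)(x)) ≥ m−1 for all i. -/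
open MvPolynomial

theorem taylor2 {n : ℕ} (f : MvPolynomial (Fin n) ℤ) (a b : Fin n → ℤ) (q : ℤ) :
    ∃ c : ℤ, eval (fun j => a j + q * b j) f
      = eval a f + q * (∑ i, b i * eval a (pderiv i f)) + q^2 * c := by
  induction f using MvPolynomial.induction_on with
  | C r => exact ⟨0, by simp⟩
  | add f g hf hg =>
    obtain ⟨c, hc⟩ := hf; obtain ⟨d, hd⟩ := hg
    refine ⟨c + d, ?_⟩
    simp only [map_add, hc, hd, mul_add, Finset.sum_add_distrib]
    ring
  | mul_X g i hg =>
    obtain ⟨c, hc⟩ := hg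
    set E := eval a g with hE
    set S := ∑ j, b j * eval a (pderiv j g) with hS
    refine ⟨c * a i + S * b i + q * (c * b i), ?_⟩
    have hder : ∀ j, eval a (pderiv j (g * X i))
        = eval a (pderiv j g) * a i + E * (if j = i then 1 else 0) := by
      intro j
      rw [pderiv_mul, map_add, map_mul, map_mul, eval_X, pderiv_X]
      by_cases h : j = i <;> simp [h, Pi.single_apply, E]
    have hsum : ∑ j, b j * eval a (pderiv j (g * X i)) = S * a i + b i * E := by
      simp only [hder, mul_add, Finset.sum_add_distrib]
      rw [hS, Finset.sum_mul]
      congr 1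
      · exact Finset.sum_congr rfl fun j _ => by ring
      · rw [Finset.sum_congr rfl (fun j _ => show b j * (E * if j = i then 1 else 0)
            = if j = i then b j * E else 0 from by by_cases h : j = i <;> simp [h, mul_comm])]
        simp [Finset.sum_ite_eq']
    simp only [map_mul, eval_X, hc, hsum, ← hE]
    ring

theorem char_sum_zero (N : ℕ) (hN : 0 < N) (c : ℤ) (h : ¬ ((N:ℤ) ∣ c)) :
    ∑ w : Fin N, Complex.exp (2 * Real.pi * Complex.I * (((w : ℕ) * c : ℤ) : ℂ) / N) = 0 := by
  have hNC : (N : ℂ) ≠ 0 := Nat.cast_ne_zero.mpr hN.ne'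
  have hprim := Complex.isPrimitiveRoot_exp N hN.ne'
  set ζ := Complex.exp (2 * Real.pi * Complex.I / N) with hζ
  have hzpow : ∀ t : ℤ, ζ ^ t = Complex.exp (2 * Real.pi * Complex.I * (t : ℂ) / N) := by
    intro t
    rw [← Complex.exp_int_mul]
    congr 1; ring
  set ω := ζ ^ (c : ℤ) with hω
  have hω1 : ω ≠ 1 := fun hc => h (by exact_mod_cast (hprim.zpow_eq_one_iff_dvd c).mp hc)
  have hterm : ∀ w : Fin N, Complex.exp (2 * Real.pi * Complex.I * (((w : ℕ) * c : ℤ) : ℂ) / N)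
      = ω ^ (w : ℕ) := by
    intro w
    rw [hω, ← zpow_natCast (ζ ^ (c:ℤ)) (w : ℕ), ← zpow_mul, mul_comm (c:ℤ), hzpow]
  have hωN : ω ^ N = 1 := by
    rw [hω, ← zpow_natCast (ζ ^ (c:ℤ)) N, ← zpow_mul, mul_comm, zpow_mul, zpow_natCast,
      hprim.pow_eq_one, one_zpow]
  rw [Finset.sum_congr rfl fun w _ => hterm w]
  rw [Fin.sum_univ_eq_sum_range (fun k => ω ^ k) N, geom_sum_eq hω1, hωN, sub_self, zero_div]

theorem pi_char_sum_zero {n : ℕ} (N : ℕ) (hN : 0 < N) (c : Fin n → ℤ) (i0 : Fin n)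
    (h : ¬ ((N:ℤ) ∣ c i0)) :
    ∑ z : Fin n → Fin N,
      Complex.exp (2 * Real.pi * Complex.I * ((∑ i, ((z i : ℕ) : ℤ) * c i : ℤ) : ℂ) / N) = 0 := by
  have hsplit : ∀ z : Fin n → Fin N,
      Complex.exp (2 * Real.pi * Complex.I * ((∑ i, ((z i : ℕ) : ℤ) * c i : ℤ) : ℂ) / N)
      = ∏ i, Complex.exp (2 * Real.pi * Complex.I * (((z i : ℕ) * c i : ℤ) : ℂ) / N) := by
    intro z
    rw [← Complex.exp_sum]
    congr 1
    push_cast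
    rw [Finset.mul_sum, Finset.sum_div]
  rw [Finset.sum_congr rfl fun z _ => hsplit z]
  classical
  rw [← Fintype.piFinset_univ,
    ← Finset.prod_univ_sum (fun _ : Fin n => (Finset.univ : Finset (Fin N)))
      (fun i w => Complex.exp (2 * Real.pi * Complex.I * (((w : ℕ) * c i : ℤ) : ℂ) / N))]
  exact Finset.prod_eq_zero (Finset.mem_univ i0) (char_sum_zero N hN (c i0) h)

theorem vp_lt_iff (p : ℕ) (hp : p.Prime) (m : ℕ) (hm : 2 ≤ m) (a : ℤ) :
    (2 * vp p a < ((m - 1 : ℕ) : ℕ∞)) ↔ ¬ ((p:ℤ) ^ (m / 2) ∣ a) := by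
  haveI := Fact.mk hp
  by_cases ha : a = 0
  · simp only [vp, ha, if_pos rfl, dvd_zero, not_true, iff_false, not_lt, if_true]
    rw [show (2:ℕ∞) * ⊤ = ⊤ from ENat.mul_top (by decide)]
    exact le_top
  · rw [vp, if_neg ha]
    have hcast : (2 : ℕ∞) * ((padicValInt p a : ℕ) : ℕ∞)
        = ((2 * padicValInt p a : ℕ) : ℕ∞) := by push_cast; ring
    rw [hcast, Nat.cast_lt, padicValInt_dvd_iff]
    simp only [ha, false_or]
    omega

open scoped Classical in
/-- Let `p` be prime, `m ≥ 2`, `f ∈ ℤ[x₁,…,xₙ]`.  Then the exponential sum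
`Σ_{x ∈ S} e(f(x)/p^m)` vanishes, where `S ⊆ {0,…,p^m−1}ⁿ` is the set of `x` with
`2·v_p((∂f/∂xᵢ)(x)) < m−1` for some `i`; equivalently, the full sum over `{0,…,p^m−1}ⁿ`
equals the sum restricted to those `x` with `2·v_p((∂f/∂xᵢ)(x)) ≥ m−1` for all `i`. -/
theorem stmt14 (p : ℕ) (hp : p.Prime) (m : ℕ) (hm : 2 ≤ m)
    {n : ℕ} (f : MvPolynomial (Fin n) ℤ) :
    (∑ x ∈ Finset.univ.filter (fun x : Fin n → Fin (p ^ m) => ∃ i : Fin n,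
          2 * vp p (MvPolynomial.eval (fun j => ((x j : ℕ) : ℤ)) (MvPolynomial.pderiv i f)) <
            ((m - 1 : ℕ) : ℕ∞)),
        Complex.exp (2 * Real.pi * Complex.I *
          ((MvPolynomial.eval (fun j => ((x j : ℕ) : ℤ)) f : ℤ) : ℂ) / (p : ℂ) ^ m) = 0) ∧
    (∑ x : Fin n → Fin (p ^ m),
        Complex.exp (2 * Real.pi * Complex.I *
          ((MvPolynomial.eval (fun j => ((x j : ℕ) : ℤ)) f : ℤ) : ℂ) / (p : ℂ) ^ m) =
      ∑ x ∈ Finset.univ.filter (fun x : Fin n → Fin (p ^ m) => ∀ i : Fin n,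
          ((m - 1 : ℕ) : ℕ∞) ≤
            2 * vp p (MvPolynomial.eval (fun j => ((x j : ℕ) : ℤ)) (MvPolynomial.pderiv i f))),
        Complex.exp (2 * Real.pi * Complex.I *
          ((MvPolynomial.eval (fun j => ((x j : ℕ) : ℤ)) f : ℤ) : ℂ) / (p : ℂ) ^ m)) := by
  haveI := Fact.mk hp
  set s := m / 2 with hsdef
  set r := m - m / 2 with hrdef
  have hp0 : 0 < p := hp.pos
  have hrs : r + s = m := by omega
  have h2r : m ≤ 2 * r := by omega
  have hsr : s ≤ r := by omega
  have hR : 0 < p ^ r := pow_pos hp0 r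
  have hNs : 0 < p ^ s := pow_pos hp0 s
  have hpm : p ^ r * p ^ s = p ^ m := by rw [← pow_add, hrs]
  set P : (Fin n → Fin (p ^ m)) → Prop := fun x => ∃ i : Fin n,
      2 * vp p (MvPolynomial.eval (fun j => ((x j : ℕ) : ℤ)) (MvPolynomial.pderiv i f)) <
        ((m - 1 : ℕ) : ℕ∞) with hPdef
  set F : (Fin n → Fin (p ^ m)) → ℂ := fun x =>
      Complex.exp (2 * Real.pi * Complex.I *
        ((MvPolynomial.eval (fun j => ((x j : ℕ) : ℤ)) f : ℤ) : ℂ) / (p : ℂ) ^ m) with hFdef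
  -- the splitting equivalence
  let E : (Fin n → Fin (p ^ r)) × (Fin n → Fin (p ^ s)) ≃ (Fin n → Fin (p ^ m)) :=
  { toFun := fun yz j => ⟨(yz.1 j : ℕ) + p ^ r * (yz.2 j : ℕ), by
      calc (yz.1 j : ℕ) + p ^ r * (yz.2 j : ℕ) < p ^ r + p ^ r * (yz.2 j : ℕ) :=
            Nat.add_lt_add_right (yz.1 j).isLt _
        _ = p ^ r * ((yz.2 j : ℕ) + 1) := by ring
        _ ≤ p ^ r * p ^ s := Nat.mul_le_mul_left _ (yz.2 j).isLt
        _ = p ^ m := hpm⟩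
    invFun := fun x => (fun j => ⟨(x j : ℕ) % p ^ r, Nat.mod_lt _ hR⟩,
      fun j => ⟨(x j : ℕ) / p ^ r, Nat.div_lt_of_lt_mul (by rw [hpm]; exact (x j).isLt)⟩)
    right_inv := fun x => _root_.funext fun j => Fin.ext (Nat.mod_add_div _ _)
    left_inv := fun yz => by
      refine Prod.ext (_root_.funext fun j => Fin.ext ?_) (_root_.funext fun j => Fin.ext ?_)
      · show ((yz.1 j : ℕ) + p ^ r * (yz.2 j : ℕ)) % p ^ r = (yz.1 j : ℕ)
        rw [Nat.add_mul_mod_self_left, Nat.mod_eq_of_lt (yz.1 j).isLt]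
      · show ((yz.1 j : ℕ) + p ^ r * (yz.2 j : ℕ)) / p ^ r = (yz.2 j : ℕ)
        rw [Nat.add_mul_div_left _ _ hR, Nat.div_eq_of_lt (yz.1 j).isLt, zero_add] }
  have key : ∑ x ∈ Finset.univ.filter P, F x = 0 := by
    rw [Finset.sum_filter, ← Equiv.sum_comp E (fun x => if P x then F x else 0),
      Fintype.sum_prod_type]
    apply Finset.sum_eq_zero
    intro y _
    set a : Fin n → ℤ := fun j => ((y j : ℕ) : ℤ) with hadef
    have hxvec : ∀ z : Fin n → Fin (p ^ s),
        (fun j => (((E (y, z)) j : ℕ) : ℤ)) = fun j => a j + (p:ℤ)^r * ((z j : ℕ) : ℤ) := by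
      intro z
      funext j
      show (((y j : ℕ) + p ^ r * (z j : ℕ) : ℕ) : ℤ) = _
      push_cast
      ring
    have hdvd_iff : ∀ (i : Fin n) (z : Fin n → Fin (p ^ s)),
        ((p:ℤ)^s ∣ eval (fun j => a j + (p:ℤ)^r * ((z j : ℕ) : ℤ)) (pderiv i f))
          ↔ ((p:ℤ)^s ∣ eval a (pderiv i f)) := by
      intro i z
      obtain ⟨c, hc⟩ := taylor2 (pderiv i f) a (fun j => ((z j : ℕ) : ℤ)) ((p:ℤ)^r)
      have h1 : (p:ℤ)^s ∣ (p:ℤ)^r * (∑ j, ((z j : ℕ):ℤ) * eval a (pderiv j (pderiv i f))) :=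
        Dvd.dvd.mul_right (pow_dvd_pow _ hsr) _
      have h2 : (p:ℤ)^s ∣ ((p:ℤ)^r)^2 * c :=
        Dvd.dvd.mul_right (by rw [← pow_mul]; exact pow_dvd_pow _ (by omega)) _
      rw [hc]
      constructor
      · intro h
        have := dvd_sub (dvd_sub h h2) h1
        simpa using this
      · intro h
        exact dvd_add (dvd_add h h1) h2
    have hPiff : ∀ z : Fin n → Fin (p ^ s),
        P (E (y, z)) ↔ ∃ i, ¬ ((p:ℤ) ^ s ∣ eval a (pderiv i f)) := by
      intro z
      rw [hPdef]
      simp only [hxvec z, vp_lt_iff p hp m hm]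
      exact ⟨fun ⟨i, hi⟩ => ⟨i, fun hd => hi ((hdvd_iff i z).mpr hd)⟩,
        fun ⟨i, hi⟩ => ⟨i, fun hd => hi ((hdvd_iff i z).mp hd)⟩⟩
    by_cases hQ : ∃ i, ¬ ((p:ℤ) ^ s ∣ eval a (pderiv i f))
    · obtain ⟨i0, hi0⟩ := hQ
      have hterm : ∀ z : Fin n → Fin (p ^ s),
          (if P (E (y, z)) then F (E (y, z)) else 0)
          = Complex.exp (2 * Real.pi * Complex.I * ((eval a f : ℤ) : ℂ) / (p:ℂ)^m)
            * Complex.exp (2 * Real.pi * Complex.I *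
                ((∑ i, ((z i : ℕ) : ℤ) * eval a (pderiv i f) : ℤ) : ℂ) / ((p ^ s : ℕ) : ℂ)) := by
        intro z
        rw [if_pos ((hPiff z).mpr ⟨i0, hi0⟩)]
        obtain ⟨c, hc⟩ := taylor2 f a (fun j => ((z j : ℕ) : ℤ)) ((p:ℤ)^r)
        rw [hFdef]
        simp only [hxvec z, hc]
        have hpc : (p:ℂ) ≠ 0 := Nat.cast_ne_zero.mpr hp0.ne'
        have e2 : (p:ℂ)^r * (p:ℂ)^s = (p:ℂ)^m := by
          rw [← pow_add, hrs]
        have e1 : ((p:ℂ)^r)^2 = (p:ℂ)^(2*r - m) * (p:ℂ)^m := by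
          rw [← pow_mul, ← pow_add]
          congr 1
          omega
        have harg : 2 * Real.pi * Complex.I *
              ((eval a f + (p:ℤ)^r * (∑ i, ((z i : ℕ) : ℤ) * eval a (pderiv i f))
                + ((p:ℤ)^r)^2 * c : ℤ) : ℂ) / (p:ℂ)^m
            = 2 * Real.pi * Complex.I * ((eval a f : ℤ) : ℂ) / (p:ℂ)^m
              + 2 * Real.pi * Complex.I *
                  ((∑ i, ((z i : ℕ) : ℤ) * eval a (pderiv i f) : ℤ) : ℂ) / ((p ^ s : ℕ) : ℂ)
              + ((c * (p:ℤ)^(2*r - m) : ℤ) : ℂ) * (2 * Real.pi * Complex.I) := by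
          push_cast
          rw [div_add_div _ _ (pow_ne_zero m hpc) (pow_ne_zero s hpc)]
          rw [div_add' _ _ _ (mul_ne_zero (pow_ne_zero m hpc) (pow_ne_zero s hpc))]
          rw [div_eq_div_iff (pow_ne_zero m hpc)
            (mul_ne_zero (pow_ne_zero m hpc) (pow_ne_zero s hpc))]
          linear_combination (2 * Real.pi * Complex.I *
              (∑ i, ((z i : ℕ) : ℂ) * ((eval a (pderiv i f) : ℤ) : ℂ)) * (p:ℂ)^m) * e2
            + (2 * Real.pi * Complex.I * (c:ℂ) * (p:ℂ)^m * (p:ℂ)^s) * e1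
        rw [harg, Complex.exp_add, Complex.exp_add, Complex.exp_int_mul_two_pi_mul_I, mul_one]
      rw [Finset.sum_congr rfl fun z _ => hterm z, ← Finset.mul_sum,
        pi_char_sum_zero (p^s) hNs (fun i => eval a (pderiv i f)) i0
          (by push_cast; exact hi0), mul_zero]
    · apply Finset.sum_eq_zero
      intro z _
      rw [if_neg (fun h => hQ ((hPiff z).mp h))]
  refine ⟨key, ?_⟩
  rw [← Finset.sum_filter_add_sum_filter_not Finset.univ P F, key, zero_add]
  congr 1
  apply Finset.filter_congr
  intro x _
  rw [hPdef]
  simp only [not_exists, not_lt]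
end
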